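/- arXiv:2107.12353 — 7 statements merged into one kernel-verified Lean document; each statement's English description precedes it below -/
import Mathlib

section
/- For all n ≥ 1, there is exactly one cyclic permutation of length n avoiding the vincular cyclic pattern [\overline{12}3], namely the cyclic class of the decreasing permutation n, n−1, …, 1. -/
/-!
In an avoider every cyclic ascent ends at the maximum entry `n - 1` (otherwise the maximum,
met later around the circle, completes the pattern), so there is at most one ascent. Reading
the rotation that starts at the entry `0`, the first step is that ascent, hence the next
entry is `n - 1` and the remaining steps are descents through values in `1, …, n - 1`,
which forces the decreasing order. Conversely the decreasing permutation has the single
ascent `0, n - 1`, which ends at the maximum.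
-/

/-- The position obtained from `p` by moving `k` steps forward cyclically. -/
def cyc {n : ℕ} (p : Fin n) (k : ℕ) : Fin n :=
  ⟨(p.val + k) % n, Nat.mod_lt _ p.pos⟩

/-- `σ` (as a cyclic permutation) contains the vincular cyclic pattern 12-3:
there is a cyclic ascent `σ p < σ (p+1)` and a later element (going once around
the circle) larger than both. -/
def Contains12v3 {n : ℕ} (σ : Equiv.Perm (Fin n)) : Prop :=
  ∃ (p : Fin n) (k : ℕ), 2 ≤ k ∧ k < n ∧
    σ p < σ (cyc p 1) ∧ σ (cyc p 1) < σ (cyc p k)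

theorem eq_sub_of_succ_lt_of_bounds {m : ℕ} {f : ℕ → ℕ} (htop : f 0 ≤ m)
    (hpos : ∀ i < m, 1 ≤ f i) (hdec : ∀ i, i + 1 < m → f (i + 1) < f i) :
    ∀ i < m, f i = m - i := by
  have upper : ∀ i < m, f i + i ≤ m := by
    intro i
    induction i with
    | zero => exact fun _ => by simpa using htop
    | succ i ih => intro hi; have := hdec i hi; have := ih (by omega); omega
  have lower : ∀ d < m, d + 1 ≤ f (m - 1 - d) := by
    intro d
    induction d with
    | zero => intro hm; simpa using hpos (m - 1) (by omega)
    | succ d ih =>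
      intro hd
      have := hdec (m - 1 - (d + 1)) (by omega)
      rw [show m - 1 - (d + 1) + 1 = m - 1 - d by omega] at this
      have := ih (by omega)
      omega
  intro i hi
  have := upper i hi
  have := lower (m - 1 - i) (by omega)
  rw [show m - 1 - (m - 1 - i) = i by omega] at this
  omega

namespace cyc

variable {n : ℕ}

@[simp] theorem val_eq (p : Fin n) (k : ℕ) : (cyc p k).val = (p.val + k) % n := rfl

theorem zero_right (p : Fin n) : cyc p 0 = p :=
  Fin.ext (by simp [Nat.mod_eq_of_lt p.isLt])

theorem injective (k : ℕ) : Function.Injective (fun p : Fin n => cyc p k) := by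
  intro p q h
  exact Fin.ext <|
    (Nat.ModEq.add_right_cancel' k (congrArg Fin.val h)).eq_of_lt_of_lt p.isLt q.isLt

theorem exists_eq (p c : Fin n) : ∃ k < n, cyc p k = c :=
  ⟨(c.val + (n - p.val)) % n, Nat.mod_lt _ p.pos, Fin.ext <| by
    have := p.isLt; have := c.isLt
    simp only [val_eq, Nat.add_mod_mod]
    rw [show p.val + (c.val + (n - p.val)) = c.val + n by omega, Nat.add_mod_right,
      Nat.mod_eq_of_lt c.isLt]⟩

theorem one_ne_self (hn : 2 ≤ n) (p : Fin n) : cyc p 1 ≠ p := fun h => by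
  have hval := congrArg Fin.val h
  have hp := p.isLt
  simp only [val_eq] at hval
  rcases Nat.lt_or_ge (p.val + 1) n with hp1 | hp1
  · rw [Nat.mod_eq_of_lt hp1] at hval; omega
  · rw [show p.val + 1 = n by omega, Nat.mod_self] at hval; omega

end cyc

section Pattern

variable {n : ℕ} {σ : Equiv.Perm (Fin n)}

theorem contains12v3_iff :
    Contains12v3 σ ↔ ∃ p c, σ p < σ (cyc p 1) ∧ σ (cyc p 1) < σ c := by
  constructor
  · rintro ⟨p, k, -, -, hasc, hbig⟩
    exact ⟨p, cyc p k, hasc, hbig⟩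
  · rintro ⟨p, c, hasc, hbig⟩
    obtain ⟨k, hk, rfl⟩ := cyc.exists_eq p c
    have hk0 : k ≠ 0 := by rintro rfl; rw [cyc.zero_right] at hbig; exact lt_asymm hasc hbig
    have hk1 : k ≠ 1 := by rintro rfl; exact lt_irrefl _ hbig
    exact ⟨p, k, by omega, hk, hasc, hbig⟩

theorem not_contains12v3_iff :
    ¬ Contains12v3 σ ↔ ∀ p, σ p < σ (cyc p 1) → (σ (cyc p 1)).val = n - 1 := by
  rw [contains12v3_iff]
  push Not
  constructor
  · intro h p hasc
    have hp := p.pos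
    have hle := h p (σ.symm ⟨n - 1, by omega⟩) hasc
    rw [Equiv.apply_symm_apply, Fin.le_def] at hle
    have := (σ (cyc p 1)).isLt
    simp only at hle
    omega
  · intro h p c hasc
    rw [Fin.le_def, h p hasc]
    have := (σ c).isLt
    omega

theorem eq_of_ascent_of_not_contains12v3 (hav : ¬ Contains12v3 σ) {p q : Fin n}
    (hp : σ p < σ (cyc p 1)) (hq : σ q < σ (cyc q 1)) : p = q :=
  have top := not_contains12v3_iff.mp hav
  cyc.injective 1 (σ.injective (Fin.ext ((top p hp).trans (top q hq).symm)))

theorem eq_sub_of_not_contains12v3 (hn : 1 ≤ n) (h0 : σ ⟨0, hn⟩ = ⟨0, hn⟩)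
    (hav : ¬ Contains12v3 σ) (j : Fin n) : (σ j).val = (n - j.val) % n := by
  have hj := j.isLt
  obtain hn1 | hn2 : n = 1 ∨ 2 ≤ n := by omega
  · subst hn1; have := (σ j).isLt; omega
  have hpos : ∀ p : Fin n, p.val ≠ 0 → 0 < (σ p).val := fun p hp => by
    have hne := σ.injective.ne (Fin.ne_of_val_ne (j := ⟨0, hn⟩) hp)
    rw [h0] at hne
    exact Nat.pos_of_ne_zero fun h => hne (Fin.ext h)
  have hasc0 : σ ⟨0, hn⟩ < σ (cyc ⟨0, hn⟩ 1) := by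
    rw [h0, Fin.lt_def]; exact hpos _ (by simp [Nat.mod_eq_of_lt hn2])
  have hdesc : ∀ p : Fin n, p.val ≠ 0 → σ (cyc p 1) < σ p := fun p hp =>
    (lt_or_gt_of_ne (σ.injective.ne (cyc.one_ne_self hn2 p))).resolve_right
      fun hasc => hp (congrArg Fin.val (eq_of_ascent_of_not_contains12v3 hav hasc hasc0))
  have hvals := eq_sub_of_succ_lt_of_bounds (m := n - 1)
    (f := fun i => (σ (cyc ⟨0, hn⟩ (i + 1))).val)
    (not_contains12v3_iff.mp hav _ hasc0).le
    (fun i hi => hpos _ (by simp [Nat.mod_eq_of_lt (show i + 1 < n by omega)]))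
    (fun i hi => by
      have step : cyc ⟨0, hn⟩ (i + 1 + 1) = cyc (cyc ⟨0, hn⟩ (i + 1)) 1 := Fin.ext (by simp)
      simpa only [step, Fin.lt_def] using
        hdesc _ (by simp [Nat.mod_eq_of_lt (show i + 1 < n by omega)]))
  rcases Nat.eq_zero_or_pos j.val with hj0 | hj0
  · rw [show j = ⟨0, hn⟩ from Fin.ext hj0, h0]; simp
  · have hjpos : cyc ⟨0, hn⟩ (j.val - 1 + 1) = j :=
      Fin.ext (by simp [Nat.sub_add_cancel hj0, Nat.mod_eq_of_lt hj])
    have hσj := hvals (j.val - 1) (by omega)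
    simp only [hjpos] at hσj
    rw [hσj, Nat.mod_eq_of_lt (by omega)]
    omega

theorem not_contains12v3_of_eq_sub (h : ∀ j : Fin n, (σ j).val = (n - j.val) % n) :
    ¬ Contains12v3 σ := by
  refine not_contains12v3_iff.mpr fun p hasc => ?_
  have hp := p.isLt
  rw [Fin.lt_def, h, h, cyc.val_eq] at hasc
  rw [h, cyc.val_eq]
  rcases Nat.lt_or_ge (p.val + 1) n with hp1 | hp1
  · rw [Nat.mod_eq_of_lt hp1] at hasc ⊢
    rcases Nat.eq_zero_or_pos p.val with hp0 | hp0
    · rw [hp0, Nat.mod_eq_of_lt (by omega)]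
    · rw [Nat.mod_eq_of_lt (show n - p.val < n by omega),
        Nat.mod_eq_of_lt (show n - (p.val + 1) < n by omega)] at hasc
      omega
  · rw [show p.val + 1 = n by omega, Nat.mod_self, Nat.sub_zero, Nat.mod_self] at hasc
    omega

end Pattern

/-- for `n ≥ 1`, the unique cyclic permutation of length `n` avoiding
the vincular cyclic pattern 12-3 is the cyclic class of the decreasing permutation
`n, n-1, …, 1`: taking in each cyclic class the rotation with minimum entry first,
`σ` avoids the pattern iff `σ j = (n - j) mod n` for all `j`. -/
theorem stmt1 (n : ℕ) (hn : 1 ≤ n) (σ : Equiv.Perm (Fin n)) :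
    (σ ⟨0, hn⟩ = ⟨0, hn⟩ ∧ ¬ Contains12v3 σ) ↔
      (∀ j : Fin n, (σ j).val = (n - j.val) % n) :=
  ⟨fun ⟨h0, hav⟩ => eq_sub_of_not_contains12v3 hn h0 hav, fun h =>
    ⟨Fin.ext (by rw [h]; simp), not_contains12v3_of_eq_sub h⟩⟩
end

section
/- For all n ≥ 1, there is exactly one cyclic permutation of length n avoiding the vincular cyclic pattern [\overline{31}2], namely the cyclic class of the decreasing permutation n, n−1, …, 1. -/
/-- `σ` (as a cyclic permutation) contains the vincular cyclic pattern 31-2: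
cyclically adjacent entries `a = σ p`, `b = σ (p+1)` and a later element `c`
(going once around the circle) with `b < c < a`. -/
def Contains31v2 {n : ℕ} (σ : Equiv.Perm (Fin n)) : Prop :=
  ∃ (p : Fin n) (k : ℕ), 2 ≤ k ∧ k < n ∧
    σ (cyc p 1) < σ (cyc p k) ∧ σ (cyc p k) < σ p

/-!
Avoiding 31-2 means that every cyclic descent is a descent by exactly one: if `σ (p + 1) + 1 < σ p`,
the value `σ (p + 1) + 1` sits somewhere else on the circle and completes the pattern. Reading the
permutation backwards from `σ 0 = 0`, each entry is then at most one more than the entry after it,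
and all smaller values are already used, so the entries are forced to be `1, 2, …, n - 1`.
-/

section

open Fin.CommRing

variable {n : ℕ} [NeZero n]

lemma cyc_eq_add (p : Fin n) (k : ℕ) : cyc p k = p + (k : Fin n) :=
  Fin.ext <| by simp [cyc, Fin.val_add, Fin.val_natCast]

lemma exists_cyc_eq (p q : Fin n) : ∃ k < n, cyc p k = q :=
  ⟨(q - p).val, (q - p).isLt, by rw [cyc_eq_add, Fin.cast_val_eq_self, add_sub_cancel]⟩

lemma val_add_one_le_succ (x : Fin n) : (x + 1).val ≤ x.val + 1 := by
  rw [Fin.val_add]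
  exact (Nat.mod_le _ _).trans (Nat.add_le_add_left (Nat.mod_le _ _) _)

theorem not_contains31v2_iff (σ : Equiv.Perm (Fin n)) :
    ¬ Contains31v2 σ ↔ ∀ p, (σ p).val ≤ (σ (p + 1)).val + 1 := by
  constructor
  · intro hA p
    by_contra! hgap
    obtain ⟨k, hkn, hk⟩ := exists_cyc_eq p (σ.symm ⟨(σ (p + 1)).val + 1, by omega⟩)
    have hσk : (σ (cyc p k)).val = (σ (p + 1)).val + 1 := by
      rw [hk, Equiv.apply_symm_apply]
    have hk0 : k ≠ 0 := by
      rintro rfl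
      rw [cyc_eq_add, Nat.cast_zero, add_zero] at hσk
      omega
    have hk1 : k ≠ 1 := by
      rintro rfl
      rw [cyc_eq_add, Nat.cast_one] at hσk
      omega
    refine hA ⟨p, k, by omega, hkn, ?_, ?_⟩
    · rw [Fin.lt_def, hσk, cyc_eq_add, Nat.cast_one]
      omega
    · rwa [Fin.lt_def, hσk]
  · rintro h ⟨p, k, -, -, hlow, hhigh⟩
    rw [cyc_eq_add, Nat.cast_one, Fin.lt_def] at hlow
    rw [Fin.lt_def] at hhigh
    have := h p
    omega

theorem apply_neg_natCast_of_forall_le_succ (σ : Equiv.Perm (Fin n)) (h0 : σ 0 = 0)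
    (h : ∀ p, (σ p).val ≤ (σ (p + 1)).val + 1) (k : ℕ) (hkn : k < n) :
    σ (-(k : Fin n)) = k := by
  induction k using Nat.strong_induction_on with
  | _ k ih =>
  obtain _ | k := k
  · simpa using h0
  have hle : (σ (-((k + 1 : ℕ) : Fin n))).val ≤ k + 1 := by
    have hstep := h (-((k + 1 : ℕ) : Fin n))
    rwa [show -((k + 1 : ℕ) : Fin n) + 1 = -(k : Fin n) by push_cast; ring,
      ih k (by omega) (by omega), Fin.val_cast_of_lt (by omega)] at hstep
  have hge : k + 1 ≤ (σ (-((k + 1 : ℕ) : Fin n))).val := by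
    by_contra! hlt
    set i := (σ (-((k + 1 : ℕ) : Fin n))).val with hi
    have htaken : σ (-(i : Fin n)) = σ (-((k + 1 : ℕ) : Fin n)) := by
      rw [ih i hlt (by omega), hi, Fin.cast_val_eq_self]
    have hcast := congrArg Fin.val (neg_injective (σ.injective htaken))
    rw [Fin.val_cast_of_lt (by omega), Fin.val_cast_of_lt hkn] at hcast
    omega
  exact Fin.ext (by rw [Fin.val_cast_of_lt hkn]; omega)

theorem eq_neg_of_forall_le_succ (σ : Equiv.Perm (Fin n)) (h0 : σ 0 = 0)
    (h : ∀ p, (σ p).val ≤ (σ (p + 1)).val + 1) (j : Fin n) : σ j = -j := by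
  simpa using apply_neg_natCast_of_forall_le_succ σ h0 h (-j).val (-j).isLt

end

/-- for `n ≥ 1`, the unique cyclic permutation of length `n` avoiding
the vincular cyclic pattern 31-2 is the cyclic class of the decreasing permutation. -/
theorem stmt2 (n : ℕ) (hn : 1 ≤ n) (σ : Equiv.Perm (Fin n)) :
    (σ ⟨0, hn⟩ = ⟨0, hn⟩ ∧ ¬ Contains31v2 σ) ↔
      (∀ j : Fin n, (σ j).val = (n - j.val) % n) := by
  have : NeZero n := ⟨by omega⟩
  have hzero : (⟨0, hn⟩ : Fin n) = 0 := Fin.ext (Fin.val_zero n).symm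
  have hdecreasing : (∀ j : Fin n, (σ j).val = (n - j.val) % n) ↔ ∀ j, σ j = -j := by
    simp only [Fin.ext_iff, Fin.val_neg']
  rw [hzero, not_contains31v2_iff, hdecreasing]
  constructor
  · rintro ⟨h0, h⟩
    exact eq_neg_of_forall_le_succ σ h0 h
  · intro h
    refine ⟨by rw [h, neg_zero], fun p => ?_⟩
    rw [h, h, show -p = -(p + 1) + 1 by abel]
    exact val_add_one_le_succ _
end

section
/- For every n ≥ 3, no cyclic permutation of length n avoids both consecutive cyclic patterns [\overline{123}] and [\overline{132}]. -/
/-- Three cyclically consecutive entries order isomorphic to 123. -/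
def Contains123c {n : ℕ} (σ : Equiv.Perm (Fin n)) : Prop :=
  ∃ p : Fin n, σ p < σ (cyc p 1) ∧ σ (cyc p 1) < σ (cyc p 2)

/-- Three cyclically consecutive entries order isomorphic to 132. -/
def Contains132c {n : ℕ} (σ : Equiv.Perm (Fin n)) : Prop :=
  ∃ p : Fin n, σ p < σ (cyc p 2) ∧ σ (cyc p 2) < σ (cyc p 1)

/-- Three cyclically consecutive entries order isomorphic to 213. -/
def Contains213c {n : ℕ} (σ : Equiv.Perm (Fin n)) : Prop :=
  ∃ p : Fin n, σ (cyc p 1) < σ p ∧ σ p < σ (cyc p 2)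

/-- Three cyclically consecutive entries order isomorphic to 231. -/
def Contains231c {n : ℕ} (σ : Equiv.Perm (Fin n)) : Prop :=
  ∃ p : Fin n, σ (cyc p 2) < σ p ∧ σ p < σ (cyc p 1)

/-- Three cyclically consecutive entries order isomorphic to 321. -/
def Contains321c {n : ℕ} (σ : Equiv.Perm (Fin n)) : Prop :=
  ∃ p : Fin n, σ (cyc p 2) < σ (cyc p 1) ∧ σ (cyc p 1) < σ p

theorem cyc_zero {n : ℕ} (p : Fin n) : cyc p 0 = p :=
  Fin.ext (Nat.mod_eq_of_lt p.isLt)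

theorem cyc_eq_cyc_iff {n : ℕ} (p : Fin n) (j k : ℕ) : cyc p j = cyc p k ↔ j ≡ k [MOD n] :=
  Fin.ext_iff.trans ⟨Nat.ModEq.add_left_cancel' p.val, Nat.ModEq.add_left p.val⟩

theorem cyc_ne_cyc {n : ℕ} (p : Fin n) {j k : ℕ} (hj : j < n) (hk : k < n) (hjk : j ≠ k) :
    cyc p j ≠ cyc p k := by
  rw [Ne, cyc_eq_cyc_iff, Nat.ModEq, Nat.mod_eq_of_lt hj, Nat.mod_eq_of_lt hk]
  exact hjk

theorem cyc_ne_self {n : ℕ} (p : Fin n) {k : ℕ} (hk0 : 0 < k) (hkn : k < n) : cyc p k ≠ p := by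
  simpa only [cyc_zero] using cyc_ne_cyc p hkn (by omega) hk0.ne'

theorem Equiv.Perm.apply_lt_apply_of_apply_eq_zero {n : ℕ} (σ : Equiv.Perm (Fin n)) {p q : Fin n}
    (hp : (σ p).val = 0) (hq : q ≠ p) : σ p < σ q :=
  lt_of_le_of_ne (Fin.le_iff_val_le_val.mpr (hp ▸ Nat.zero_le _)) (σ.injective.ne hq.symm)

/-- for `n ≥ 3`, no cyclic permutation of length `n` avoids both
consecutive cyclic patterns 123 and 132. -/
theorem stmt3 (n : ℕ) (hn : 3 ≤ n) (σ : Equiv.Perm (Fin n)) :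
    Contains123c σ ∨ Contains132c σ := by
  obtain ⟨p, hp⟩ := σ.surjective ⟨0, by omega⟩
  have hmin : ∀ k, 0 < k → k < n → σ p < σ (cyc p k) := fun k hk0 hkn =>
    σ.apply_lt_apply_of_apply_eq_zero (congrArg Fin.val hp) (cyc_ne_self p hk0 hkn)
  rcases lt_or_gt_of_ne (σ.injective.ne (cyc_ne_cyc p (j := 1) (k := 2) (by omega) hn (by decide)))
    with h12 | h21
  · exact Or.inl ⟨p, hmin 1 one_pos (by omega), h12⟩
  · exact Or.inr ⟨p, hmin 2 two_pos hn, h21⟩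
end

section
/- For every even n ≥ 2, the number of cyclic permutations of length n avoiding both consecutive cyclic patterns [\overline{123}] and [\overline{321}] equals the number of up-down permutations of length n−1. -/
open Equiv OrderDual

def IsUpDown {α : Type*} [Preorder α] {m : ℕ} (f : Fin m → α) : Prop :=
  ∀ i : ℕ, ∀ h : i + 1 < m,
    (Even i → f ⟨i, by omega⟩ < f ⟨i + 1, h⟩) ∧ (¬ Even i → f ⟨i + 1, h⟩ < f ⟨i, by omega⟩)

section UpDown

variable {α β : Type*} [LinearOrder α] [Preorder β] {m : ℕ}

theorem isUpDown_comp_iff {g : α → β} (hg : StrictMono g) {f : Fin m → α} :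
    IsUpDown (g ∘ f) ↔ IsUpDown f := by
  simp only [IsUpDown, Function.comp_apply, hg.lt_iff_lt]

theorem isUpDown_iff_tail {f : Fin (m + 1) → α} :
    IsUpDown f ↔ (∀ h : 1 < m + 1, f 0 < f ⟨1, h⟩) ∧ IsUpDown (toDual ∘ f ∘ Fin.succ) := by
  simp only [IsUpDown, Function.comp_apply, toDual_lt_toDual]
  constructor
  · intro hf
    refine ⟨fun h => (hf 0 h).1 Even.zero, fun i h => ?_⟩
    have := hf (i + 1) (by omega)
    simp only [Nat.even_add_one, not_not] at this
    exact this.symm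
  · rintro ⟨h0, hf⟩ (_ | i) h
    · exact ⟨fun _ => h0 h, fun h' => (h' Even.zero).elim⟩
    · have := hf i (by omega)
      simp only [Nat.even_add_one, not_not]
      exact this.symm

end UpDown

section Cyclic

variable {n : ℕ}

theorem cyc_of_lt {p : Fin n} {k : ℕ} (h : p.val + k < n) : cyc p k = ⟨p + k, h⟩ :=
  Fin.ext (Nat.mod_eq_of_lt h)

theorem cyc_of_eq [NeZero n] {p : Fin n} {k : ℕ} (h : p.val + k = n) : cyc p k = 0 :=
  Fin.ext (by simp [cyc, h])

variable {σ : Perm (Fin n)}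

theorem contains123c_of_lt {i : ℕ} (h : i + 2 < n) (h₁ : σ ⟨i, by omega⟩ < σ ⟨i + 1, by omega⟩)
    (h₂ : σ ⟨i + 1, by omega⟩ < σ ⟨i + 2, h⟩) : Contains123c σ :=
  ⟨⟨i, by omega⟩, by rwa [cyc_of_lt], by rwa [cyc_of_lt, cyc_of_lt]⟩

theorem contains321c_of_lt {i : ℕ} (h : i + 2 < n) (h₁ : σ ⟨i + 1, by omega⟩ < σ ⟨i, by omega⟩)
    (h₂ : σ ⟨i + 2, h⟩ < σ ⟨i + 1, by omega⟩) : Contains321c σ :=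
  ⟨⟨i, by omega⟩, by rwa [cyc_of_lt, cyc_of_lt], by rwa [cyc_of_lt]⟩

variable [NeZero n]

theorem apply_zero_lt_apply (h0 : σ 0 = 0) {j : Fin n} (hj : j ≠ 0) : σ 0 < σ j := by
  rw [h0, Fin.pos_iff_ne_zero, ← h0]
  exact σ.injective.ne hj

theorem isUpDown_of_not_contains (h0 : σ 0 = 0) (h123 : ¬ Contains123c σ)
    (h321 : ¬ Contains321c σ) : IsUpDown σ := by
  intro i
  induction i with
  | zero =>
    exact fun h => ⟨fun _ => apply_zero_lt_apply h0 (by simp [Fin.ext_iff]),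
      fun h' => (h' Even.zero).elim⟩
  | succ i ih =>
    intro h
    obtain ⟨hup, hdown⟩ := ih (by omega)
    have hne : σ ⟨i + 2, h⟩ ≠ σ ⟨i + 1, by omega⟩ := σ.injective.ne (by simp [Fin.ext_iff])
    constructor
    · intro heven
      refine lt_of_not_ge fun hle => h321 (contains321c_of_lt h ?_ (lt_of_le_of_ne hle hne))
      exact hdown (Nat.even_add_one.mp heven)
    · intro hodd
      refine lt_of_not_ge fun hle => h123 (contains123c_of_lt h ?_ (lt_of_le_of_ne hle hne.symm))
      exact hup (by simpa [Nat.even_add_one] using hodd)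

theorem not_contains123c_of_isUpDown (h0 : σ 0 = 0) (hσ : IsUpDown σ) : ¬ Contains123c σ := by
  rintro ⟨p, h₁, h₂⟩
  obtain h | h | h : p.val + 2 < n ∨ p.val + 2 = n ∨ p.val + 1 = n := by omega
  · rw [cyc_of_lt (k := 1) (by omega)] at h₁
    rw [cyc_of_lt h, cyc_of_lt (k := 1) (by omega)] at h₂
    rcases Nat.even_or_odd p with hp | hp
    · exact lt_asymm h₂ ((hσ (p + 1) h).2 (by simpa [Nat.even_add_one] using hp))
    · exact lt_asymm h₁ ((hσ p (by omega)).2 (Nat.not_even_iff_odd.mpr hp))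
  · rw [cyc_of_eq h, h0] at h₂
    exact Fin.not_lt_zero _ h₂
  · rw [cyc_of_eq h, h0] at h₁
    exact Fin.not_lt_zero _ h₁

theorem not_contains321c_of_isUpDown (hn : Even n) (h0 : σ 0 = 0) (hσ : IsUpDown σ) :
    ¬ Contains321c σ := by
  rintro ⟨p, h₁, h₂⟩
  obtain h | h | h : p.val + 2 < n ∨ p.val + 2 = n ∨ p.val + 1 = n := by omega
  · rw [cyc_of_lt h, cyc_of_lt (k := 1) (by omega)] at h₁
    rw [cyc_of_lt (k := 1) (by omega)] at h₂
    rcases Nat.even_or_odd p with hp | hp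
    · exact lt_asymm h₂ ((hσ p (by omega)).1 hp)
    · exact lt_asymm h₁ ((hσ (p + 1) h).1 (Nat.even_add_one.mpr (Nat.not_even_iff_odd.mpr hp)))
  · rw [cyc_of_lt (k := 1) (by omega)] at h₂
    have hp : Even p.val := by
      obtain ⟨k, hk⟩ := hn
      exact ⟨k - 1, by omega⟩
    exact lt_asymm h₂ ((hσ p (by omega)).1 hp)
  · rw [cyc_of_eq h, h0] at h₁
    exact Fin.not_lt_zero _ h₁

theorem avoids_iff_isUpDown (hn : Even n) (h0 : σ 0 = 0) :
    ¬ Contains123c σ ∧ ¬ Contains321c σ ↔ IsUpDown σ :=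
  ⟨fun h => isUpDown_of_not_contains h0 h.1 h.2, fun h =>
    ⟨not_contains123c_of_isUpDown h0 h, not_contains321c_of_isUpDown hn h0 h⟩⟩

end Cyclic

section FixingZero

variable {m : ℕ}

def permFixingZeroEquiv : {σ : Perm (Fin (m + 1)) // σ 0 = 0} ≃ Perm (Fin m) where
  toFun σ := (Perm.decomposeFin σ.1).2
  invFun e := ⟨Perm.decomposeFin.symm (0, e), Perm.decomposeFin_symm_apply_zero 0 e⟩
  left_inv := by
    rintro ⟨σ, hσ⟩
    have h0 : (Perm.decomposeFin σ).1 = 0 := by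
      conv_rhs => rw [← hσ, ← Perm.decomposeFin.symm_apply_apply σ]
      rw [Perm.decomposeFin_symm_apply_zero]
    ext1
    show Perm.decomposeFin.symm (0, (Perm.decomposeFin σ).2) = σ
    rw [← h0, Prod.mk.eta, Equiv.symm_apply_apply]
  right_inv e := by simp

theorem permFixingZeroEquiv_apply_succ (σ : {σ : Perm (Fin (m + 1)) // σ 0 = 0}) (i : Fin m) :
    σ.1 i.succ = (permFixingZeroEquiv σ i).succ := by
  conv_lhs => rw [← permFixingZeroEquiv.symm_apply_apply σ]
  exact (Perm.decomposeFin_symm_apply_succ _ 0 i).trans (by rw [swap_self, refl_apply])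

theorem isUpDown_iff_permFixingZeroEquiv (σ : {σ : Perm (Fin (m + 1)) // σ 0 = 0}) :
    IsUpDown σ.1 ↔ IsUpDown ⇑(Fin.revPerm * permFixingZeroEquiv σ : Perm (Fin m)) := by
  have hmono : StrictMono (toDual ∘ Fin.succ ∘ Fin.rev : Fin m → (Fin (m + 1))ᵒᵈ) :=
    (Fin.strictMono_succ.comp_strictAnti Fin.rev_strictAnti).dual_right
  have htail : toDual ∘ σ.1 ∘ Fin.succ =
      (toDual ∘ Fin.succ ∘ Fin.rev) ∘ ⇑(Fin.revPerm * permFixingZeroEquiv σ : Perm (Fin m)) := by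
    ext i
    simp [permFixingZeroEquiv_apply_succ]
  rw [isUpDown_iff_tail, htail, isUpDown_comp_iff hmono, and_iff_right_iff_imp]
  exact fun _ _ => apply_zero_lt_apply σ.2 (by simp [Fin.ext_iff])

theorem card_isUpDown_fixing_zero :
    Nat.card {σ : Perm (Fin (m + 1)) // σ 0 = 0 ∧ IsUpDown σ} =
      Nat.card {τ : Perm (Fin m) // IsUpDown τ} :=
  Nat.card_congr <| (subtypeSubtypeEquivSubtypeInter _ _).symm.trans <|
    subtypeEquiv (permFixingZeroEquiv.trans (Equiv.mulLeft Fin.revPerm))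
      isUpDown_iff_permFixingZeroEquiv

end FixingZero

-- A cyclic permutation is represented by its rotation that fixes `0`.
/-- for even `n ≥ 2`, the number of cyclic permutations of length `n`
(counted via the unique rotation placing the entry `0` first) avoiding both
consecutive cyclic patterns 123 and 321 equals the number of up-down permutations
of length `n - 1`. -/
theorem stmt6 (n : ℕ) (hn : 2 ≤ n) (he : Even n) :
    Nat.card {σ : Equiv.Perm (Fin n) //
        σ ⟨0, by omega⟩ = ⟨0, by omega⟩ ∧ ¬ Contains123c σ ∧ ¬ Contains321c σ} =
    Nat.card {τ : Equiv.Perm (Fin (n - 1)) //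
        ∀ i : ℕ, ∀ h : i + 1 < n - 1,
          (Even i → τ ⟨i, by omega⟩ < τ ⟨i + 1, h⟩) ∧
          (¬ Even i → τ ⟨i + 1, h⟩ < τ ⟨i, by omega⟩)} := by
  obtain ⟨m, rfl⟩ : ∃ m, n = m + 1 := ⟨n - 1, by omega⟩
  refine (Nat.card_congr (subtypeEquivRight fun σ =>
    and_congr_right fun h0 => avoids_iff_isUpDown he h0)).trans ?_
  exact card_isUpDown_fixing_zero
end

section
/- For all n ≥ 1, the number of cyclic permutations of length n+2 avoiding all three consecutive cyclic patterns [\overline{132}], [\overline{213}], [\overline{321}] equals the number of total cyclic orders Z on the set {1,…,n+2} such that (i, i+1, i+2) ∈ Z for all 1 ≤ i ≤ n, and (n+1, n+2, 1) ∈ Z and (n+2, 1, 2) ∈ Z. -/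
/-- A total cyclic order on `X`: a ternary relation satisfying cyclicity,
antisymmetry, transitivity, and totality on distinct triples. -/
def IsTotalCyclicOrder {X : Type*} (Z : X → X → X → Prop) : Prop :=
  (∀ x y z, Z x y z → Z y z x) ∧
  (∀ x y z, Z x y z → ¬ Z z y x) ∧
  (∀ x y z u, Z x y z → Z x z u → Z x y u) ∧
  (∀ x y z, x ≠ y → y ≠ z → x ≠ z → (Z x y z ∨ Z z y x))

/-!
Pulling back the standard cyclic order of `Fin m` along a permutation `σ` is a bijection from
permutations fixing `0` onto total cyclic orders on `Fin m`. Its inverse cuts a total cyclic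
order `Z` at `0`: the relation `a = 0 ≠ b ∨ Z 0 a b` is a strict linear order that induces `Z`
back, and `σ a` is the number of elements below `a` in it. Avoiding 132, 213 and 321 says that
the values at every three cyclically consecutive positions are in cyclic order, i.e. that the
pulled-back cyclic order contains every triple `(j, j + 1, j + 2)`.
-/

open Function

section CyclicOrderOf

variable {α : Type*} {r : α → α → Prop}

def cyclicOrderOf (r : α → α → Prop) (a b c : α) : Prop :=
  (r a b ∧ r b c) ∨ (r b c ∧ r c a) ∨ (r c a ∧ r a b)

theorem isTotalCyclicOrder_cyclicOrderOf [IsStrictTotalOrder α r] :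
    IsTotalCyclicOrder (cyclicOrderOf r) := by
  have htrans {a b c : α} : r a b → r b c → r a c := _root_.trans
  have hirr (a : α) : ¬ r a a := irrefl a
  have htot (a b : α) (h : a ≠ b) : r a b ∨ r b a := by
    rcases trichotomous (r := r) a b with h' | h' | h' <;> tauto
  refine ⟨fun a b c h => ?_, fun a b c h h' => ?_, fun a b c d h h' => ?_,
    fun a b c hab hbc hac => ?_⟩ <;> unfold cyclicOrderOf at *
  · tauto
  · grind
  · grind
  · grind

end CyclicOrderOf

instance {α β : Type*} [LinearOrder β] (e : α ≃ β) :
    IsStrictTotalOrder α ((· < ·) on e) :=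
  e.injective.isStrictTotalOrder_onFun _

namespace IsTotalCyclicOrder

variable {X : Type*} {Z W : X → X → X → Prop} (hZ : IsTotalCyclicOrder Z)
include hZ

theorem rotate {x y z : X} (h : Z x y z) : Z y z x := hZ.1 x y z h

theorem not_reverse {x y z : X} (h : Z x y z) : ¬ Z z y x := hZ.2.1 x y z h

theorem ne {x y z : X} (h : Z x y z) : x ≠ y ∧ y ≠ z ∧ x ≠ z := by
  have not_xyx (u v : X) : ¬ Z u v u := fun h => hZ.not_reverse h h
  refine ⟨?_, ?_, ?_⟩ <;> rintro rfl
  · exact not_xyx _ _ (hZ.rotate h)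
  · exact not_xyx _ _ (hZ.rotate (hZ.rotate h))
  · exact not_xyx _ _ h

theorem of_chain {x a b c : X} (hab : Z x a b) (hbc : Z x b c) : Z a b c := by
  obtain ⟨-, hab', -⟩ := hZ.ne hab
  obtain ⟨-, hbc', -⟩ := hZ.ne hbc
  have hac : a ≠ c := by
    rintro rfl
    exact hZ.not_reverse hab (hZ.rotate hbc)
  refine (hZ.2.2.2 a b c hab' hbc' hac).resolve_right fun hcba => ?_
  -- `Z b a c` and `Z b c x` give `Z b a x`, the reverse of `Z x a b`
  exact hZ.not_reverse hab (hZ.2.2.1 _ _ _ _ (hZ.rotate hcba) (hZ.rotate hbc))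

theorem eq_of_imp (hW : IsTotalCyclicOrder W) (h : ∀ a b c, W a b c → Z a b c) : W = Z := by
  funext a b c
  refine propext ⟨h a b c, fun hZabc => ?_⟩
  obtain ⟨hab, hbc, hac⟩ := hZ.ne hZabc
  exact (hW.2.2.2 a b c hab hbc hac).resolve_right fun hW' => hZ.not_reverse hZabc (h _ _ _ hW')

end IsTotalCyclicOrder

section Rank

variable {α : Type*}

noncomputable def relRank (r : α → α → Prop) (a : α) : ℕ := {b | r b a}.ncard

variable {r : α → α → Prop} [Finite α] [IsStrictTotalOrder α r]

theorem relRank_lt_relRank {a b : α} (h : r a b) : relRank r a < relRank r b :=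
  Set.ncard_lt_ncard ⟨fun _ hc => _root_.trans hc h, fun hsub => irrefl a (hsub h)⟩

theorem relRank_lt_relRank_iff {a b : α} : relRank r a < relRank r b ↔ r a b := by
  refine ⟨fun hlt => ?_, relRank_lt_relRank⟩
  rcases trichotomous (r := r) a b with h | rfl | h
  · exact h
  · exact absurd hlt (lt_irrefl _)
  · exact absurd hlt (relRank_lt_relRank h).asymm

theorem relRank_injective : Injective (relRank r) := fun a b h => by
  rcases trichotomous (r := r) a b with h' | h' | h'
  · exact absurd h (relRank_lt_relRank h').ne
  · exact h'
  · exact absurd h (relRank_lt_relRank h').ne'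

theorem relRank_lt_card (a : α) : relRank r a < Nat.card α := by
  rw [← Set.ncard_univ]
  exact Set.ncard_lt_ncard ⟨Set.subset_univ _, fun h => irrefl a (h (Set.mem_univ a))⟩

end Rank

section Cut

variable {X : Type*} {Z : X → X → X → Prop}

def cutAt (Z : X → X → X → Prop) (x₀ a b : X) : Prop :=
  (a = x₀ ∧ b ≠ x₀) ∨ Z x₀ a b

variable (hZ : IsTotalCyclicOrder Z) (x₀ : X)
include hZ

theorem isStrictTotalOrder_cutAt : IsStrictTotalOrder X (cutAt Z x₀) where
  irrefl a h := by
    rcases h with ⟨ha, ha'⟩ | h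
    exacts [ha' ha, (hZ.ne h).2.1 rfl]
  trans a b c := by
    rintro (⟨rfl, hb⟩ | hab) (⟨rfl, -⟩ | hbc)
    · exact absurd rfl hb
    · exact Or.inl ⟨rfl, (hZ.ne hbc).2.2.symm⟩
    · exact absurd rfl (hZ.ne hab).2.2
    · exact Or.inr (hZ.2.2.1 _ _ _ _ hab hbc)
  trichotomous a b hab hba := by
    by_contra hne
    by_cases ha : a = x₀
    · exact hab (Or.inl ⟨ha, ha ▸ Ne.symm hne⟩)
    by_cases hb : b = x₀
    · exact hba (Or.inl ⟨hb, hb ▸ hne⟩)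
    rcases hZ.2.2.2 x₀ a b (Ne.symm ha) hne (Ne.symm hb) with h | h
    exacts [hab (Or.inr h), hba (Or.inr (hZ.rotate (hZ.rotate h)))]

theorem cyclicOrderOf_cutAt : cyclicOrderOf (cutAt Z x₀) = Z := by
  have := isStrictTotalOrder_cutAt hZ x₀
  -- both sides are total cyclic orders, so one inclusion suffices
  refine hZ.eq_of_imp isTotalCyclicOrder_cyclicOrderOf fun a b c => ?_
  have chain {a b c : X} (hab : cutAt Z x₀ a b) (hbc : cutAt Z x₀ b c) : Z a b c := by
    rcases hab with ⟨rfl, hb⟩ | hab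
    · exact hbc.resolve_left (hb ·.1)
    · exact hZ.of_chain hab (hbc.resolve_left ((hZ.ne hab).2.2 ·.1.symm))
  rintro (⟨hab, hbc⟩ | ⟨hbc, hca⟩ | ⟨hca, hab⟩)
  · exact chain hab hbc
  · exact hZ.rotate (hZ.rotate (chain hbc hca))
  · exact hZ.rotate (chain hca hab)

theorem relRank_cutAt_self : relRank (cutAt Z x₀) x₀ = 0 := by
  have : {b | cutAt Z x₀ b x₀} = ∅ := Set.eq_empty_of_forall_notMem fun b hb => by
    rcases hb with ⟨-, h⟩ | h
    exacts [h rfl, (hZ.ne h).2.2 rfl]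
  rw [relRank, this, Set.ncard_empty]

end Cut

theorem cutAt_cyclicOrderOf {X : Type*} {r : X → X → Prop} [IsStrictTotalOrder X r] {x₀ : X}
    (hmin : ∀ a, a ≠ x₀ → r x₀ a) : cutAt (cyclicOrderOf r) x₀ = r := by
  funext a b
  refine propext ⟨?_, fun hab => ?_⟩
  · rintro (⟨rfl, hb⟩ | ⟨-, hab⟩ | ⟨hab, -⟩ | ⟨hb, -⟩)
    · exact hmin b hb
    · exact hab
    · exact hab
    · by_cases hb' : b = x₀
      · exact absurd (hb' ▸ hb) (irrefl _)
      · exact absurd hb (asymm (hmin b hb'))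
  · by_cases ha : a = x₀
    · subst ha
      exact Or.inl ⟨rfl, by rintro rfl; exact irrefl _ hab⟩
    · exact Or.inr (Or.inl ⟨hmin a ha, hab⟩)

section RankPerm

variable {m : ℕ} {r : Fin m → Fin m → Prop}

noncomputable def rankPerm (hr : IsStrictTotalOrder (Fin m) r) : Equiv.Perm (Fin m) :=
  Equiv.ofBijective (fun a => ⟨relRank r a, by simpa using relRank_lt_card a⟩)
    (Finite.injective_iff_bijective.mp fun _ _ h => relRank_injective (congrArg Fin.val h))

@[simp]
theorem rankPerm_apply_val (hr : IsStrictTotalOrder (Fin m) r) (a : Fin m) :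
    (rankPerm hr a : ℕ) = relRank r a := rfl

theorem onFun_lt_rankPerm (hr : IsStrictTotalOrder (Fin m) r) :
    ((· < ·) on rankPerm hr) = r := by
  funext a b
  exact propext (Fin.lt_def.trans relRank_lt_relRank_iff)

theorem relRank_onFun_lt (σ : Equiv.Perm (Fin m)) (a : Fin m) :
    relRank ((· < ·) on σ) a = σ a := by
  have : {b | σ b < σ a} = σ ⁻¹' ↑(Finset.Iio (σ a)) := by ext; simp
  change Set.ncard {b | σ b < σ a} = _
  rw [this, Set.ncard_preimage_of_injective_subset_range σ.injective (by simp),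
    Set.ncard_coe_finset, Fin.card_Iio]

end RankPerm

theorem cyc_val_eq {m : ℕ} (p : Fin m) {k : ℕ} (hk : k ≤ m) :
    (cyc p k : ℕ) = p + k ∨ (cyc p k : ℕ) + m = p + k := by
  simp only [cyc]
  rcases Nat.lt_or_ge (p + k) m with h | h
  · exact Or.inl (Nat.mod_eq_of_lt h)
  · right
    rw [Nat.mod_eq_sub_mod h, Nat.mod_eq_of_lt (by omega)]
    omega

theorem cyc_ne {m : ℕ} (hm : 3 ≤ m) (p : Fin m) :
    p ≠ cyc p 1 ∧ cyc p 1 ≠ cyc p 2 ∧ p ≠ cyc p 2 := by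
  simp only [ne_eq, Fin.ext_iff]
  have := p.isLt
  rcases cyc_val_eq p (k := 1) (by omega) with h1 | h1 <;>
    rcases cyc_val_eq p (k := 2) (by omega) with h2 | h2 <;> omega

theorem cyclicOrderOf_lt_iff {α : Type*} [LinearOrder α] {x y z : α} (hxy : x ≠ y)
    (hyz : y ≠ z) (hxz : x ≠ z) : cyclicOrderOf (· < ·) x y z ↔
      ¬ (x < z ∧ z < y) ∧ ¬ (y < x ∧ x < z) ∧ ¬ (z < y ∧ y < x) := by
  unfold cyclicOrderOf
  grind

theorem avoids_iff_forall_cyclicOrderOf {m : ℕ} (hm : 3 ≤ m) (σ : Equiv.Perm (Fin m)) :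
    (¬ Contains132c σ ∧ ¬ Contains213c σ ∧ ¬ Contains321c σ) ↔
      ∀ p, cyclicOrderOf ((· < ·) on σ) p (cyc p 1) (cyc p 2) := by
  simp only [Contains132c, Contains213c, Contains321c, not_exists, ← forall_and]
  refine forall_congr' fun p => ?_
  obtain ⟨h01, h12, h02⟩ := cyc_ne hm p
  exact (cyclicOrderOf_lt_iff (σ.injective.ne h01) (σ.injective.ne h12)
    (σ.injective.ne h02)).symm

/-- the number of cyclic permutations of length `n + 2` (counted via
the unique rotation placing the entry `0` first) avoiding the consecutive cyclic
patterns 132, 213 and 321 equals the number of total cyclic orders `Z` on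
`Fin (n+2)` containing all cyclically consecutive triples `(j, j+1, j+2)`. -/
theorem stmt7 (n : ℕ) (hn : 1 ≤ n) :
    Nat.card {σ : Equiv.Perm (Fin (n + 2)) //
        σ 0 = 0 ∧ ¬ Contains132c σ ∧ ¬ Contains213c σ ∧ ¬ Contains321c σ} =
    Nat.card {Z : Fin (n + 2) → Fin (n + 2) → Fin (n + 2) → Prop //
        IsTotalCyclicOrder Z ∧ ∀ j : Fin (n + 2), Z j (cyc j 1) (cyc j 2)} := by
  have hm : 3 ≤ n + 2 := by omega
  refine Nat.card_congr
    { toFun := fun σ => ⟨cyclicOrderOf ((· < ·) on σ.1), isTotalCyclicOrder_cyclicOrderOf,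
        (avoids_iff_forall_cyclicOrderOf hm σ.1).mp σ.2.2⟩
      invFun := fun Z => ⟨rankPerm (isStrictTotalOrder_cutAt Z.2.1 0), ?_, ?_⟩
      left_inv := ?_
      right_inv := ?_ }
  · exact Fin.ext (relRank_cutAt_self Z.2.1 0)
  · refine (avoids_iff_forall_cyclicOrderOf hm _).mpr fun p => ?_
    rw [onFun_lt_rankPerm, cyclicOrderOf_cutAt Z.2.1]
    exact Z.2.2 p
  · rintro ⟨σ, h0, -⟩
    have hmin (a : Fin (n + 2)) (ha : a ≠ 0) : ((· < ·) on σ) 0 a := by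
      show σ 0 < σ a
      rw [h0, Fin.pos_iff_ne_zero]
      exact h0 ▸ σ.injective.ne ha
    refine Subtype.ext (Equiv.ext fun a => Fin.ext ?_)
    rw [rankPerm_apply_val, cutAt_cyclicOrderOf hmin, relRank_onFun_lt]
  · rintro ⟨Z, hZ, -⟩
    exact Subtype.ext (by simp only [onFun_lt_rankPerm, cyclicOrderOf_cutAt hZ])
end

section
/- For all positive integers k and all 1 ≤ i ≤ k, the set Π_{i,k} of all consecutive cyclic patterns of length k with a 1 in position i is a minimal unavoidable set: it is unavoidable, but for every π ∈ S_k with π_i = 1, the set Π_{i,k} \ {π} is avoidable, i.e., for every n ≥ k there exists a cyclic permutation of length n containing no pattern from Π_{i,k} \ {π} as a consecutive cyclic pattern. -/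
/-- The window of `k` cyclically consecutive entries of `σ` starting at position
`p` is order isomorphic to the pattern `π`. -/
def WindowIso {n k : ℕ} (σ : Equiv.Perm (Fin n)) (p : Fin n)
    (π : Equiv.Perm (Fin k)) : Prop :=
  ∀ a b : Fin k, (σ (cyc p a.val) < σ (cyc p b.val) ↔ π a < π b)

open Equiv

theorem Equiv.Perm.eq_of_lt_iff_lt {k : ℕ} {ρ π : Perm (Fin k)}
    (h : ∀ a b, ρ a < ρ b ↔ π a < π b) : ρ = π := by
  have hmono : StrictMono (π.symm.trans ρ) := fun x y hxy => by
    simpa [h] using hxy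
  ext x
  simpa using congrArg Fin.val (hmono.apply_eq (x := π x))

theorem exists_perm_lt_iff_lt_of_injective {k : ℕ} {α : Type*} [LinearOrder α]
    {g : Fin k → α} (hg : Function.Injective g) :
    ∃ π : Perm (Fin k), ∀ a b, π a < π b ↔ g a < g b := by
  have hmono : StrictMono (g ∘ Tuple.sort g) :=
    (Tuple.monotone_sort g).strictMono_of_injective (hg.comp (Tuple.sort g).injective)
  exact ⟨(Tuple.sort g).symm, fun a b => by
    simpa using (hmono.lt_iff_lt (a := (Tuple.sort g).symm a) (b := (Tuple.sort g).symm b)).symm⟩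

theorem exists_perm_val_eq {n : ℕ} {f : ℕ → ℕ} (hmaps : ∀ x < n, f x < n)
    (hinj : Set.InjOn f (Set.Iio n)) : ∃ σ : Perm (Fin n), ∀ x, (σ x).val = f x := by
  let F : Fin n → Fin n := fun x => ⟨f x, hmaps x x.isLt⟩
  have hF : Function.Injective F := fun x y hxy =>
    Fin.ext (hinj x.isLt y.isLt (congrArg Fin.val hxy))
  exact ⟨Equiv.ofBijective F hF.bijective_of_finite, fun _ => rfl⟩

theorem Equiv.Perm.val_pos_of_ne {k : ℕ} {π : Perm (Fin k)} {j a : Fin k}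
    (hπ : (π j).val = 0) (ha : a ≠ j) : 0 < (π a).val :=
  Nat.pos_of_ne_zero fun h => ha (π.injective (Fin.ext (h.trans hπ.symm)))

section cyc

variable {n : ℕ}

theorem cyc_cyc (p : Fin n) (a b : ℕ) : cyc (cyc p a) b = cyc p (a + b) :=
  Fin.ext (by simp only [cyc, Nat.mod_add_mod, add_assoc])

theorem cyc_self (p : Fin n) : cyc p n = p :=
  Fin.ext (by simp [cyc, Nat.mod_eq_of_lt p.isLt])

theorem cyc_inj {p : Fin n} {a b : ℕ} (ha : a < n) (hb : b < n) (h : cyc p a = cyc p b) :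
    a = b := by
  have h' : p.val + a ≡ p.val + b [MOD n] := congrArg Fin.val h
  simpa [Nat.ModEq, Nat.mod_eq_of_lt ha, Nat.mod_eq_of_lt hb] using
    Nat.ModEq.add_left_cancel' _ h'

theorem val_cyc_of_val_eq_zero {p : Fin n} (hp : p.val = 0) {a : ℕ} (ha : a < n) :
    (cyc p a).val = a := by
  simp [cyc, hp, Nat.mod_eq_of_lt ha]

end cyc

section WindowIso

variable {n k : ℕ}

theorem WindowIso.le_of_val_eq_zero {σ : Perm (Fin n)} {p : Fin n} {ρ : Perm (Fin k)}
    (h : WindowIso σ p ρ) {j : Fin k} (hj : (ρ j).val = 0) (b : Fin k) :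
    σ (cyc p j) ≤ σ (cyc p b) :=
  not_lt.mp fun hlt => by simpa [Fin.lt_def, hj] using (h b j).mp hlt

theorem exists_windowIso_val_eq_zero (σ : Perm (Fin n)) (j : Fin k) (hkn : k ≤ n) :
    ∃ (p : Fin n) (π : Perm (Fin k)), (π j).val = 0 ∧ WindowIso σ p π := by
  have hn : 0 < n := j.pos.trans_le hkn
  let p : Fin n := cyc (σ.symm ⟨0, hn⟩) (n - j)
  have hpj : σ (cyc p j) = ⟨0, hn⟩ := by
    rw [cyc_cyc, Nat.sub_add_cancel (j.isLt.le.trans hkn), cyc_self, Equiv.apply_symm_apply]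
  have hinj : Function.Injective fun a : Fin k => σ (cyc p a) := fun a b hab =>
    Fin.ext (cyc_inj (a.isLt.trans_le hkn) (b.isLt.trans_le hkn) (σ.injective hab))
  obtain ⟨π, hπ⟩ := exists_perm_lt_iff_lt_of_injective hinj
  have hmin : ∀ b, π j ≤ π b := fun b =>
    not_lt.mp fun hlt => by simpa [hpj, Fin.lt_def] using (hπ b j).mp hlt
  exact ⟨p, π, by simpa [Fin.le_def] using hmin (π.symm ⟨0, j.pos⟩),
    fun a b => (hπ a b).symm⟩

end WindowIso

/-- Positions and values are `0`-indexed: `σ` avoids `Π_{j+1,k} \ {π}`. -/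
def AvoidsExcept {n k : ℕ} (σ : Perm (Fin n)) (j : Fin k) (π : Perm (Fin k)) : Prop :=
  ∀ ρ : Perm (Fin k), (ρ j).val = 0 → ρ ≠ π → ∀ p : Fin n, ¬ WindowIso σ p ρ

section Avoidance

variable {n k : ℕ} {j : Fin k} {π : Perm (Fin k)}

theorem avoidsExcept_of_reach (hkn : k ≤ n) {σ : Perm (Fin n)}
    (hblock : ∀ a b : Fin k, σ (Fin.castLE hkn a) < σ (Fin.castLE hkn b) ↔ π a < π b)
    (hreach : ∀ q : Fin n, q.val ≠ j.val → ∃ b : Fin k, σ (cyc (cyc q (n - j)) b) < σ q) :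
    AvoidsExcept σ j π := by
  -- `cyc q (n - j)` is the start of the window holding `q` at offset `j`.
  intro ρ hρ hne p hiso
  have hjn : j.val < n := j.isLt.trans_le hkn
  have hp : p.val = 0 := by
    by_contra hp
    have hq : (cyc p j).val ≠ j.val := fun h => hp <| by
      have h' : (p.val + j) % n = j := h
      have : p.val + j ≡ 0 + j [MOD n] := by simpa [Nat.ModEq, Nat.mod_eq_of_lt hjn] using h'
      simpa [Nat.ModEq, Nat.mod_eq_of_lt p.isLt] using Nat.ModEq.add_right_cancel' _ this
    obtain ⟨b, hb⟩ := hreach (cyc p j) hq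
    rw [cyc_cyc p, Nat.add_sub_cancel' hjn.le, cyc_self] at hb
    exact (hiso.le_of_val_eq_zero hρ b).not_gt hb
  refine hne (Perm.eq_of_lt_iff_lt fun a b => ?_)
  have hcyc : ∀ c : Fin k, cyc p c = Fin.castLE hkn c := fun c =>
    Fin.ext (val_cyc_of_val_eq_zero hp (c.isLt.trans_le hkn))
  rw [← hiso a b, ← hblock a b, hcyc, hcyc]

theorem exists_avoidsExcept_of_values (hkn : k ≤ n) {f : ℕ → ℕ} (hmaps : ∀ x < n, f x < n)
    (hinj : Set.InjOn f (Set.Iio n)) (hblock : ∀ a b : Fin k, f a < f b ↔ π a < π b)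
    (hreach : ∀ q < n, q ≠ j → ∃ b < k, f ((q + (n - j) + b) % n) < f q) :
    ∃ σ : Perm (Fin n), AvoidsExcept σ j π := by
  obtain ⟨σ, hσ⟩ := exists_perm_val_eq hmaps hinj
  refine ⟨σ, avoidsExcept_of_reach hkn (fun a b => ?_) fun q hq => ?_⟩
  · rw [Fin.lt_def, hσ, hσ]
    exact hblock a b
  · obtain ⟨b, hb, hlt⟩ := hreach q q.isLt hq
    refine ⟨⟨b, hb⟩, ?_⟩
    rw [add_assoc] at hlt
    rwa [Fin.lt_def, hσ, hσ, cyc_cyc]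

theorem exists_lt_of_eq_add_mul {f : ℕ → ℕ} {q : ℕ} (b t m : ℕ) (hb : b < k) (ht : t < n)
    (hidx : q + (n - j) + b = t + n * m) (hlt : f t < f q) :
    ∃ b < k, f ((q + (n - j) + b) % n) < f q :=
  ⟨b, hb, by rwa [hidx, Nat.add_mul_mod_self_left, Nat.mod_eq_of_lt ht]⟩

end Avoidance

section Layouts

variable {n k : ℕ} {j : Fin k} {π : Perm (Fin k)}

def bottomLayout (π : Perm (Fin k)) (x : ℕ) : ℕ :=
  if h : x < k then π ⟨x, h⟩ else x

theorem bottomLayout_injective : Function.Injective (bottomLayout π) := by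
  intro x y h
  unfold bottomLayout at h
  split_ifs at h with hx hy hy
  · exact congrArg Fin.val (π.injective (Fin.ext h))
  all_goals omega

theorem bottomLayout_lt (hkn : k ≤ n) {x : ℕ} (hx : x < n) : bottomLayout π x < n := by
  unfold bottomLayout
  split_ifs <;> omega

theorem bottomLayout_fin (a : Fin k) : bottomLayout π a = π a := by
  simp only [bottomLayout, dif_pos a.isLt, Fin.eta]

theorem bottomLayout_of_le {x : ℕ} (hx : k ≤ x) : bottomLayout π x = x :=
  dif_neg (by omega)

theorem bottomLayout_lt_iff (a b : Fin k) :
    bottomLayout π a < bottomLayout π b ↔ π a < π b := by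
  simp only [bottomLayout_fin]
  exact Fin.lt_def.symm

theorem exists_avoidsExcept_of_two_mul_add_one_eq (hkn : k ≤ n) (hπ : (π j).val = 0)
    (hj : 0 < j.val) (hk : 2 * j.val + 1 = k) : ∃ σ : Perm (Fin n), AvoidsExcept σ j π := by
  refine exists_avoidsExcept_of_values hkn (fun x => bottomLayout_lt hkn)
    bottomLayout_injective.injOn bottomLayout_lt_iff fun q hq hqj => ?_
  by_cases hqk : q < k
  · have := π.val_pos_of_ne hπ (a := ⟨q, hqk⟩) (by simp [Fin.ext_iff, hqj])
    refine exists_lt_of_eq_add_mul (2 * j - q) j 1 (by omega) (by omega) (by omega) ?_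
    simp only [bottomLayout, dif_pos j.isLt, dif_pos hqk, Fin.eta]
    omega
  · refine exists_lt_of_eq_add_mul (j - 1) (q - 1) 1 (by omega) (by omega) (by omega) ?_
    simp only [bottomLayout, dif_neg hqk]
    split_ifs <;> omega

theorem exists_avoidsExcept_of_eq (hkn : k = n) (hπ : (π j).val = 0) :
    ∃ σ : Perm (Fin n), AvoidsExcept σ j π := by
  subst hkn
  refine exists_avoidsExcept_of_values le_rfl (fun x => bottomLayout_lt le_rfl)
    bottomLayout_injective.injOn bottomLayout_lt_iff fun q hq hqj => ?_
  have := π.val_pos_of_ne hπ (a := ⟨q, hq⟩) (by simp [Fin.ext_iff, hqj])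
  have hlt : bottomLayout π j < bottomLayout π q := by
    simp only [bottomLayout, dif_pos j.isLt, dif_pos hq, Fin.eta]
    omega
  rcases (by omega : k + q ≤ 2 * j ∨ q ≤ 2 * j ∧ 2 * j < k + q ∨ 2 * j < q) with h | h | h
  · exact exists_lt_of_eq_add_mul (2 * j - q - k) j 0 (by omega) j.isLt (by omega) hlt
  · exact exists_lt_of_eq_add_mul (2 * j - q) j 1 (by omega) j.isLt (by omega) hlt
  · exact exists_lt_of_eq_add_mul (2 * j + k - q) j 2 (by omega) j.isLt (by omega) hlt

end Layouts

section TopValues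

variable {n k : ℕ} {g : ℕ → ℕ}

/-- Applied to the values of `bottomLayout`: the block keeps its minimum `0` and moves its other
values to the top, `n - k + 1, …, n - 1`; the outside positions get the values of `g`. -/
def topValues (k n : ℕ) (g : ℕ → ℕ) (v : ℕ) : ℕ :=
  if v = 0 then 0 else if v < k then n - k + v else g v

theorem topValues_zero : topValues k n g 0 = 0 := if_pos rfl

theorem topValues_of_le {v : ℕ} (hv : k ≤ v) (hk : 0 < k) : topValues k n g v = g v := by
  rw [topValues, if_neg (by omega), if_neg (by omega)]

theorem sub_lt_topValues {v : ℕ} (hv0 : v ≠ 0) (hvk : v < k) : n - k < topValues k n g v := by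
  rw [topValues, if_neg hv0, if_pos hvk]
  omega

theorem topValues_lt_topValues_iff {v w : ℕ} (hv : v < k) (hw : w < k) :
    topValues k n g v < topValues k n g w ↔ v < w := by
  unfold topValues
  split_ifs <;> omega

variable (hg : ∀ v, k ≤ v → v < n → 0 < g v ∧ g v ≤ n - k)
include hg

theorem topValues_lt (hk : 0 < k) (hkn : k ≤ n) {v : ℕ} (hv : v < n) :
    topValues k n g v < n := by
  unfold topValues
  split_ifs
  · omega
  · omega
  · have := hg v (by omega) hv
    omega

theorem topValues_injOn (hginj : Set.InjOn g (Set.Ico k n)) :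
    Set.InjOn (topValues k n g) (Set.Iio n) := by
  intro v hv w hw h
  simp only [Set.mem_Iio] at hv hw
  unfold topValues at h
  split_ifs at h with hv0 hw0 hwk hw0 hvk hwk hvk hwk
  all_goals first
    | omega
    | exact hginj ⟨by omega, hv⟩ ⟨by omega, hw⟩ h
    | have := hg v (by omega) hv; omega
    | have := hg w (by omega) hw; omega

end TopValues

section TopLayout

variable {n k : ℕ} {j : Fin k} {π : Perm (Fin k)} {g : ℕ → ℕ}

def topLayout (π : Perm (Fin k)) (n : ℕ) (g : ℕ → ℕ) (x : ℕ) : ℕ :=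
  topValues k n g (bottomLayout π x)

theorem topLayout_of_le {x : ℕ} (hx : k ≤ x) (hk : 0 < k) : topLayout π n g x = g x := by
  rw [topLayout, bottomLayout_of_le hx, topValues_of_le hx hk]

theorem topLayout_self (hπ : (π j).val = 0) : topLayout π n g j = 0 := by
  rw [topLayout, bottomLayout_fin, hπ, topValues_zero]

theorem sub_lt_topLayout (hπ : (π j).val = 0) {x : ℕ} (hxk : x < k) (hxj : x ≠ j) :
    n - k < topLayout π n g x := by
  have := π.val_pos_of_ne hπ (a := ⟨x, hxk⟩) (by simp [Fin.ext_iff, hxj])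
  rw [topLayout, show x = ((⟨x, hxk⟩ : Fin k) : ℕ) from rfl, bottomLayout_fin]
  exact sub_lt_topValues this.ne' (π _).isLt

theorem exists_avoidsExcept_of_topLayout (hkn : k < n) (hπ : (π j).val = 0)
    (hg : ∀ v, k ≤ v → v < n → 0 < g v ∧ g v ≤ n - k) (hginj : Set.InjOn g (Set.Ico k n))
    (hout : ∀ q, k ≤ q → q < n →
      ∃ b < k, topLayout π n g ((q + (n - j) + b) % n) < topLayout π n g q) :
    ∃ σ : Perm (Fin n), AvoidsExcept σ j π := by
  have hk := j.pos
  have hmaps : ∀ x < n, bottomLayout π x < n := fun x => bottomLayout_lt hkn.le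
  refine exists_avoidsExcept_of_values hkn.le (f := topLayout π n g)
    (fun x hx => topValues_lt hg hk hkn.le (hmaps x hx))
    ((topValues_injOn hg hginj).comp bottomLayout_injective.injOn hmaps)
    (fun a b => ?_) fun q hq hqj => ?_
  · simp only [topLayout, bottomLayout_fin]
    rw [topValues_lt_topValues_iff (π a).isLt (π b).isLt]
    exact Fin.lt_def.symm
  rcases lt_or_ge q k with hqk | hqk
  · have hfq := sub_lt_topLayout (n := n) (g := g) hπ hqk hqj
    have hfout : ∀ t, k ≤ t → t < n → topLayout π n g t ≤ n - k := fun t ht htn => by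
      rw [topLayout_of_le ht hk]
      exact (hg t ht htn).2
    rcases Nat.lt_or_gt_of_ne hqj with h | h
    · exact exists_lt_of_eq_add_mul (j - q - 1) (n - 1) 0 (by omega) (by omega) (by omega)
        ((hfout _ (by omega) (by omega)).trans_lt hfq)
    · exact exists_lt_of_eq_add_mul (j + k - q) k 1 (by omega) hkn (by omega)
        ((hfout _ le_rfl hkn).trans_lt hfq)
  · exact hout q hqk hq

theorem exists_avoidsExcept_of_two_mul_add_two_le (hkn : k < n) (hπ : (π j).val = 0)
    (hk : 2 * j.val + 2 ≤ k) : ∃ σ : Perm (Fin n), AvoidsExcept σ j π := by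
  refine exists_avoidsExcept_of_topLayout (g := fun v => n - v) hkn hπ
    (fun v hv hvn => by omega) (fun v hv w hw h => by simp only [Set.mem_Ico] at hv hw h; omega)
    fun q hqk hq => ?_
  have hfq : topLayout π n (fun v => n - v) q = n - q := topLayout_of_le hqk (by omega)
  rcases Nat.lt_or_ge (q + 1) n with h | h
  · refine exists_lt_of_eq_add_mul (j + 1) (q + 1) 1 (by omega) h (by omega) ?_
    rw [hfq, topLayout_of_le (by omega) (by omega)]
    omega
  · refine exists_lt_of_eq_add_mul (2 * j + 1) j 2 (by omega) (by omega) (by omega) ?_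
    rw [hfq, topLayout_self hπ]
    omega

theorem exists_avoidsExcept_of_le_two_mul (hkn : k < n) (hπ : (π j).val = 0)
    (hk : k ≤ 2 * j.val) : ∃ σ : Perm (Fin n), AvoidsExcept σ j π := by
  refine exists_avoidsExcept_of_topLayout (g := fun v => v - k + 1) hkn hπ
    (fun v hv hvn => by omega) (fun v hv w hw h => by simp only [Set.mem_Ico] at hv hw h; omega)
    fun q hqk hq => ?_
  have hfq : topLayout π n (fun v => v - k + 1) q = q - k + 1 := topLayout_of_le hqk (by omega)
  rcases hqk.eq_or_lt with h | h
  · refine exists_lt_of_eq_add_mul (2 * j - k) j 1 (by omega) (by omega) (by omega) ?_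
    rw [hfq, topLayout_self hπ]
    omega
  · refine exists_lt_of_eq_add_mul (j - 1) (q - 1) 1 (by omega) (by omega) (by omega) ?_
    rw [hfq, topLayout_of_le (by omega) (by omega)]
    omega

end TopLayout

theorem exists_avoidsExcept {n k : ℕ} {j : Fin k} {π : Perm (Fin k)} (hπ : (π j).val = 0)
    (hkn : k ≤ n) : ∃ σ : Perm (Fin n), AvoidsExcept σ j π := by
  rcases hkn.eq_or_lt with hkn | hkn
  · exact exists_avoidsExcept_of_eq hkn hπ
  rcases (by omega : k = 1 ∨ 2 * j.val + 2 ≤ k ∨ (0 < j.val ∧ 2 * j.val + 1 = k) ∨ k ≤ 2 * j.val)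
    with hk | hk | ⟨hj, hk⟩ | hk
  · subst hk
    exact ⟨1, fun ρ _ hne => absurd (Subsingleton.elim ρ π) hne⟩
  · exact exists_avoidsExcept_of_two_mul_add_two_le hkn hπ hk
  · exact exists_avoidsExcept_of_two_mul_add_one_eq hkn.le hπ hj hk
  · exact exists_avoidsExcept_of_le_two_mul hkn hπ hk

/-- for `1 ≤ i ≤ k`, the set `Π_{i,k}` of consecutive cyclic
patterns of length `k` with minimum in position `i` is a minimal unavoidable set:
it is unavoidable, but removing any single pattern `π` from it yields a set
avoided by some cyclic permutation of every length `n ≥ k`. -/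
theorem stmt16 (k i : ℕ) (hi : 1 ≤ i) (hik : i ≤ k) :
    (∀ n, k ≤ n → ∀ σ : Equiv.Perm (Fin n),
      ∃ (p : Fin n) (π : Equiv.Perm (Fin k)),
        (π ⟨i - 1, by omega⟩).val = 0 ∧ WindowIso σ p π) ∧
    (∀ π : Equiv.Perm (Fin k), (π ⟨i - 1, by omega⟩).val = 0 →
      ∀ n, k ≤ n → ∃ σ : Equiv.Perm (Fin n),
        ∀ ρ : Equiv.Perm (Fin k), (ρ ⟨i - 1, by omega⟩).val = 0 → ρ ≠ π →
          ∀ p : Fin n, ¬ WindowIso σ p ρ) :=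
  ⟨fun _ hkn σ => exists_windowIso_val_eq_zero σ _ hkn,
    fun _ hπ _ hkn => exists_avoidsExcept hπ hkn⟩
end

section
/- Let π ∈ S_k and let [π̄] denote the set of k rotations of π viewed as consecutive cyclic patterns. Then Π = S_k \ [π̄] is avoidable: for every multiple n = mk of k, there exists a cyclic permutation of length n all of whose windows of k cyclically consecutive entries are order isomorphic to some rotation of π. Explicitly, σ given by σ_{(j-1)k + t} = m(π_t − 1) + j for 1 ≤ j ≤ m and 1 ≤ t ≤ k works. -/
theorem cyc_injective {k : ℕ} (r : ℕ) : Function.Injective fun a : Fin k => cyc a r := by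
  intro a b h
  have hmod : a.val ≡ b.val [MOD k] := Nat.ModEq.add_right_cancel' r (congrArg Fin.val h)
  exact Fin.ext (by rwa [Nat.ModEq, Nat.mod_eq_of_lt a.isLt, Nat.mod_eq_of_lt b.isLt] at hmod)

theorem modNat_cyc {m k : ℕ} (p : Fin (m * k)) (a : Fin k) :
    (cyc p a.val).modNat = cyc a (p.val % k) := by
  apply Fin.ext
  change (p.val + a.val) % (m * k) % k = (a.val + p.val % k) % k
  rw [Nat.mod_mod_of_dvd _ (dvd_mul_left k m), Nat.add_mod_mod, Nat.add_comm]

theorem mul_add_lt_mul_add_iff_of_ne {m x y i j : ℕ} (hi : i < m) (hj : j < m) (hxy : x ≠ y) :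
    m * x + i < m * y + j ↔ x < y := by
  constructor
  · intro h
    by_contra! hyx
    have : m * (y + 1) ≤ m * x := Nat.mul_le_mul_left m (lt_of_le_of_ne hyx hxy.symm)
    rw [Nat.mul_succ] at this
    omega
  · intro h
    have : m * (x + 1) ≤ m * y := Nat.mul_le_mul_left m h
    rw [Nat.mul_succ] at this
    omega

section Interleave

variable {k : ℕ} (m : ℕ) (π : Equiv.Perm (Fin k))

def interleavePerm : Equiv.Perm (Fin (m * k)) :=
  finProdFinEquiv.symm.trans <| ((Equiv.refl (Fin m)).prodCongr π).trans <|
    (Equiv.prodComm _ _).trans <| finProdFinEquiv.trans (finCongr (Nat.mul_comm k m))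

variable {m}

theorem interleavePerm_val (q : Fin (m * k)) :
    (interleavePerm m π q).val = m * (π q.modNat).val + q.val / k :=
  Nat.add_comm _ _

theorem interleavePerm_cyc_lt_iff (p : Fin (m * k)) (a b : Fin k) :
    interleavePerm m π (cyc p a.val) < interleavePerm m π (cyc p b.val) ↔
      π (cyc a (p.val % k)) < π (cyc b (p.val % k)) := by
  rcases eq_or_ne a b with rfl | hab
  · simp only [lt_self_iff_false]
  have hne : (π (cyc a (p.val % k))).val ≠ (π (cyc b (p.val % k))).val :=
    fun h => hab (cyc_injective _ (π.injective (Fin.ext h)))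
  rw [Fin.lt_def, Fin.lt_def, interleavePerm_val, interleavePerm_val, modNat_cyc, modNat_cyc]
  exact mul_add_lt_mul_add_iff_of_ne (cyc p a.val).divNat.isLt (cyc p b.val).divNat.isLt hne

end Interleave

theorem stmt19_general (k m : ℕ) (hk : 1 ≤ k) (π : Equiv.Perm (Fin k)) :
    ∃ σ : Equiv.Perm (Fin (m * k)),
      (∀ q : Fin (m * k),
        (σ q).val = m * (π ⟨q.val % k, Nat.mod_lt _ hk⟩).val + q.val / k) ∧
      (∀ p : Fin (m * k), ∃ r : ℕ, ∀ a b : Fin k,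
        (σ (cyc p a.val) < σ (cyc p b.val) ↔ π (cyc a r) < π (cyc b r))) :=
  ⟨interleavePerm m π, interleavePerm_val π,
    fun p => ⟨p.val % k, interleavePerm_cyc_lt_iff π p⟩⟩

/-- for `π ∈ S_k` and `n = m k`, the cyclic permutation `σ` with
`σ_{(j-1)k + t} = m (π_t - 1) + j` (0-indexed: `σ q = m * π (q mod k) + q div k`)
has every window of `k` cyclically consecutive entries order isomorphic to some
rotation of `π`; hence `S_k` minus the rotations of `π` is avoidable. -/
theorem stmt19 (k m : ℕ) (hk : 1 ≤ k) (hm : 1 ≤ m) (π : Equiv.Perm (Fin k)) :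
    ∃ σ : Equiv.Perm (Fin (m * k)),
      (∀ q : Fin (m * k),
        (σ q).val = m * (π ⟨q.val % k, Nat.mod_lt _ hk⟩).val + q.val / k) ∧
      (∀ p : Fin (m * k), ∃ r : ℕ, ∀ a b : Fin k,
        (σ (cyc p a.val) < σ (cyc p b.val) ↔ π (cyc a r) < π (cyc b r))) :=
  stmt19_general k m hk π
end
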